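/- arXiv:2002.00821 — 4 statements merged into one kernel-verified Lean document; each statement's English description precedes it below -/
import Mathlib

section
/- Let R be a commutative ring with identity, G a multiplicative subgroup of the unit group U(R), and S a non-empty subset of G closed under inverses. Then every vertex x of the generalized unit and unitary Cayley graph Γ(R, G, S) satisfies |G| − 1 ≤ deg(x) ≤ |G|·|S|. -/
namespace CrosscapDef

open SimpleGraph

variable {V : Type*}

/-- An embedding scheme (rotation system together with an edge signature) for a simple
graph `G`: `rot` cyclically permutes the darts around each vertex (a single cycle at every
vertex), and `sgn d = true` means the edge of `d` is orientation-reversing. -/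
structure Scheme {V : Type*} (G : SimpleGraph V) where
  rot : Equiv.Perm G.Dart
  rot_fst : ∀ d : G.Dart, (rot d).toProd.1 = d.toProd.1
  rot_single : ∀ d e : G.Dart, d.toProd.1 = e.toProd.1 → rot.SameCycle d e
  sgn : G.Dart → Bool
  sgn_symm : ∀ d : G.Dart, sgn d.symm = sgn d

/-- Crossing an edge: reverse the dart and flip the local orientation according to the
signature. -/
def Scheme.flip {G : SimpleGraph V} (σ : Scheme G) : Equiv.Perm (G.Dart × Bool) :=
  Function.Involutive.toPerm (fun p => (p.1.symm, xor p.2 (σ.sgn p.1)))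
    (by
      rintro ⟨d, s⟩
      simp [SimpleGraph.Dart.symm_symm, σ.sgn_symm, Bool.xor_assoc])

/-- Turning around a vertex: apply the rotation or its inverse, depending on the current
local orientation. -/
def Scheme.step {G : SimpleGraph V} (σ : Scheme G) : Equiv.Perm (G.Dart × Bool) where
  toFun p := (cond p.2 (σ.rot p.1) (σ.rot.symm p.1), p.2)
  invFun p := (cond p.2 (σ.rot.symm p.1) (σ.rot p.1), p.2)
  left_inv := by rintro ⟨d, s⟩; cases s <;> simp
  right_inv := by rintro ⟨d, s⟩; cases s <;> simp

/-- The face-tracing permutation of an embedding scheme. -/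
def Scheme.facePerm {G : SimpleGraph V} (σ : Scheme G) : Equiv.Perm (G.Dart × Bool) :=
  σ.step * σ.flip

/-- The number of cycles (orbits) of a permutation. -/
noncomputable def cycleCount {α : Type*} (f : Equiv.Perm α) : ℕ :=
  Nat.card (Quotient (Setoid.mk f.SameCycle
    ⟨fun _ => Equiv.Perm.SameCycle.rfl, Equiv.Perm.SameCycle.symm, Equiv.Perm.SameCycle.trans⟩))

/-- The number of faces of an embedding scheme: each face is traced twice by `facePerm`. -/
noncomputable def Scheme.faceCount {G : SimpleGraph V} (σ : Scheme G) : ℕ :=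
  cycleCount σ.facePerm / 2

/-- The Euler genus `2 - v + e - f` of (the surface of) an embedding scheme of a connected
graph. -/
noncomputable def Scheme.eulerGenus {G : SimpleGraph V} (σ : Scheme G) : ℤ :=
  2 - (Nat.card V : ℤ) + ((Nat.card G.Dart / 2 : ℕ) : ℤ) - (σ.faceCount : ℤ)

/-- An embedding scheme is orientable iff its signature is switching-equivalent to the
all-positive signature. -/
def Scheme.Orientable {G : SimpleGraph V} (σ : Scheme G) : Prop :=
  ∃ f : V → Bool, ∀ d : G.Dart, σ.sgn d = xor (f d.toProd.1) (f d.toProd.2)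

/-- `G` embeds in the sphere with `k` crosscaps: some connected supergraph of `G` (on the same
vertex set) has a cellular embedding scheme whose surface is the sphere with `k` crosscaps. -/
def EmbedsWithCrosscaps (G : SimpleGraph V) (k : ℕ) : Prop :=
  ∃ H : SimpleGraph V, G ≤ H ∧ H.Preconnected ∧
    ∃ σ : Scheme H, σ.eulerGenus = (k : ℤ) ∧ (k = 0 ∨ ¬ σ.Orientable)

/-- `G` embeds in the sphere with `g` handles (an orientable surface of genus `g`). -/
def EmbedsWithHandles (G : SimpleGraph V) (g : ℕ) : Prop :=
  ∃ H : SimpleGraph V, G ≤ H ∧ H.Preconnected ∧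
    ∃ σ : Scheme H, σ.eulerGenus = (2 * g : ℤ) ∧ σ.Orientable

/-- The nonorientable genus (crosscap number) of a finite graph: the least `k` such that `G`
embeds in the sphere with `k` crosscaps. -/
noncomputable def crosscap (G : SimpleGraph V) : ℕ :=
  sInf {k : ℕ | EmbedsWithCrosscaps G k}

/-- The (orientable) genus of a finite graph. -/
noncomputable def genus (G : SimpleGraph V) : ℕ :=
  sInf {g : ℕ | EmbedsWithHandles G g}

/-- The nonorientable genus of an arbitrary (possibly infinite) graph: the supremum of the
nonorientable genera of its finite (induced) subgraphs. -/
noncomputable def crosscapE (G : SimpleGraph V) : ℕ∞ :=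
  ⨆ s : Finset V, (crosscap (G.induce (s : Set V)) : ℕ∞)

end CrosscapDef

namespace CrosscapDef
/-- The generalized unit and unitary Cayley graph `Γ(R, G, S)`: vertices are the elements of
`R`, and distinct `x`, `y` are adjacent iff `x + s*y` is a unit belonging to `G` for some
`s ∈ S`. -/
def gammaGraph (R : Type*) [CommRing R] (G : Subgroup Rˣ) (S : Set Rˣ)
    (hSG : S ⊆ (G : Set Rˣ)) (hS : S⁻¹ ⊆ S) : SimpleGraph R where
  Adj x y := x ≠ y ∧ ∃ s ∈ S, ∃ u ∈ G, (u : R) = x + (s : Rˣ) * y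
  symm := ⟨by
    rintro x y ⟨hxy, s, hs, u, hu, h⟩
    refine ⟨hxy.symm, s⁻¹, hS (by simpa using hs), s⁻¹ * u,
      mul_mem (inv_mem (hSG hs)) hu, ?_⟩
    have h1 : ((s⁻¹ : Rˣ) : R) * (s : R) = 1 := Units.inv_mul s
    calc ((s⁻¹ * u : Rˣ) : R) = ((s⁻¹ : Rˣ) : R) * ((u : Rˣ) : R) := Units.val_mul _ _
      _ = ((s⁻¹ : Rˣ) : R) * (x + (s : Rˣ) * y) := by rw [h]
      _ = y + ((s⁻¹ : Rˣ) : R) * x := by rw [mul_add, ← mul_assoc, h1]; ring⟩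
  loopless := ⟨fun x h => h.1 rfl⟩

/-- The graph `Γ(R, S) = Γ(R, U(R), S)`. -/
def unitGammaGraph (R : Type*) [CommRing R] (S : Set Rˣ) (hS : S⁻¹ ⊆ S) : SimpleGraph R :=
  gammaGraph R ⊤ S (fun x _ => by simp) hS

/-- The co-maximal graph of `R`: distinct `x`, `y` are adjacent iff `Rx + Ry = R`. -/
def comaximalGraph (R : Type*) [CommRing R] : SimpleGraph R where
  Adj x y := x ≠ y ∧ Ideal.span {x} ⊔ Ideal.span {y} = ⊤
  symm := ⟨by rintro x y ⟨h1, h2⟩; exact ⟨h1.symm, by rwa [sup_comm]⟩⟩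
  loopless := ⟨fun x h => h.1 rfl⟩

end CrosscapDef

/-! Solving `x + s y = u` for `y` shows that the neighbours of `x` are the points `s⁻¹ (u - x)`
with `u ∈ G`, `s ∈ S`, other than `x` itself. There are at most `|G| |S|` of them, and already
for one fixed `s` they are `|G|` distinct points. -/

namespace CrosscapDef

variable {R : Type*} [CommRing R]

theorem injective_units_inv_mul_sub (s : Rˣ) (x : R) :
    Function.Injective fun u : Rˣ => ((s⁻¹ : Rˣ) : R) * ((u : R) - x) :=
  (Units.isUnit _).mul_right_injective.comp (sub_left_injective.comp Units.val_injective)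

theorem gammaGraph_neighborSet {G : Subgroup Rˣ} {S : Set Rˣ} (hSG : S ⊆ (G : Set Rˣ))
    (hS : S⁻¹ ⊆ S) (x : R) :
    (gammaGraph R G S hSG hS).neighborSet x =
      (fun p : Rˣ × Rˣ => ((p.2⁻¹ : Rˣ) : R) * ((p.1 : R) - x)) '' ((G : Set Rˣ) ×ˢ S) \ {x} := by
  ext y
  constructor
  · rintro ⟨hxy, s, hs, u, hu, h⟩
    exact ⟨⟨(u, s), ⟨hu, hs⟩, by simp [h]⟩, Ne.symm hxy⟩
  · rintro ⟨⟨⟨u, s⟩, ⟨hu, hs⟩, rfl⟩, hne⟩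
    exact ⟨Ne.symm hne, s, hs, u, hu, by simp⟩

end CrosscapDef

open CrosscapDef in
/-- Every vertex `x` of `Γ(R, G, S)` satisfies `|G| − 1 ≤ deg(x) ≤ |G|·|S|`. -/
theorem gammaGraph_degree_bounds {R : Type*} [CommRing R] (G : Subgroup Rˣ) (S : Set Rˣ)
    (hne : S.Nonempty) (hSG : S ⊆ (G : Set Rˣ)) (hS : S⁻¹ ⊆ S) (x : R) :
    (G : Set Rˣ).encard - 1 ≤ ((gammaGraph R G S hSG hS).neighborSet x).encard ∧
    ((gammaGraph R G S hSG hS).neighborSet x).encard ≤ (G : Set Rˣ).encard * S.encard := by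
  set f := fun p : Rˣ × Rˣ => ((p.2⁻¹ : Rˣ) : R) * ((p.1 : R) - x)
  rw [gammaGraph_neighborSet]
  constructor
  · obtain ⟨s, hs⟩ := hne
    have hG : (G : Set Rˣ).encard ≤ (f '' ((G : Set Rˣ) ×ˢ S)).encard :=
      Set.encard_le_encard_of_injOn (fun u hu => ⟨(u, s), ⟨hu, hs⟩, rfl⟩)
        (injective_units_inv_mul_sub s x).injOn
    exact (tsub_le_tsub_right hG 1).trans (Set.encard_tsub_one_le_encard_sdiff_singleton _ x)
  · calc (f '' ((G : Set Rˣ) ×ˢ S) \ {x}).encard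
        ≤ (f '' ((G : Set Rˣ) ×ˢ S)).encard := Set.encard_le_encard Set.sdiff_subset
      _ ≤ ((G : Set Rˣ) ×ˢ S).encard := Set.encard_image_le _ _
      _ = (G : Set Rˣ).encard * S.encard := Set.encard_prod
end

section
/- Let R be a commutative ring with a maximal ideal m such that |R/m| = 2, and let S ⊆ U(R) be non-empty with S⁻¹ ⊆ S. Then the graph Γ(R, S) := Γ(R, U(R), S) is bipartite. Moreover, if R is local with maximal ideal m, then Γ(R, S) is the complete bipartite graph with parts m and 1 + m. -/
/-! Reduction modulo `m` maps `R` onto a two-element ring, in which every unit is `1`. So if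
`x + s * y` is a unit with `s` a unit, then `x̄ + ȳ = 1` in `R ⧸ m`, whence `x̄ ≠ ȳ` because
`1 + 1 = 0`: the residue class is a proper 2-colouring. When `R` is local with maximal ideal `m`,
conversely `x̄ + ȳ = 1` means `x + s * y ∉ m`, i.e. `x + s * y` is a unit, for any `s ∈ S`. -/

theorem nontrivial_of_natCard_eq_two {α : Type*} (h : Nat.card α = 2) : Nontrivial α :=
  let ⟨x, y, hxy, _⟩ := Nat.card_eq_two_iff.1 h
  ⟨x, y, hxy⟩

section NatCardTwo

variable {K : Type*} [Ring K]

theorem eq_zero_or_eq_one_of_natCard_eq_two (h : Nat.card K = 2) (x : K) : x = 0 ∨ x = 1 := by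
  have := nontrivial_of_natCard_eq_two h
  obtain ⟨y, -, hy⟩ := (Nat.card_eq_two_iff' (0 : K)).1 h
  rcases eq_or_ne x 0 with hx | hx
  · exact .inl hx
  · exact .inr ((hy x hx).trans (hy 1 one_ne_zero).symm)

theorem IsUnit.eq_one_of_natCard_eq_two (h : Nat.card K = 2) {u : K} (hu : IsUnit u) : u = 1 :=
  have := nontrivial_of_natCard_eq_two h
  (eq_zero_or_eq_one_of_natCard_eq_two h u).resolve_left hu.ne_zero

theorem one_add_one_eq_zero_of_natCard_eq_two (h : Nat.card K = 2) : (1 : K) + 1 = 0 := by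
  have := nontrivial_of_natCard_eq_two h
  exact (eq_zero_or_eq_one_of_natCard_eq_two h _).resolve_right fun h1 =>
    one_ne_zero (add_eq_left.1 h1)

theorem add_eq_one_iff_of_natCard_eq_two (h : Nat.card K = 2) {a b : K} :
    a + b = 1 ↔ (a = 0 ∧ b = 1) ∨ (b = 0 ∧ a = 1) := by
  have := nontrivial_of_natCard_eq_two h
  have h2 := one_add_one_eq_zero_of_natCard_eq_two h
  rcases eq_zero_or_eq_one_of_natCard_eq_two h a with rfl | rfl <;>
    rcases eq_zero_or_eq_one_of_natCard_eq_two h b with rfl | rfl <;> simp [h2]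

theorem ne_of_add_eq_one_of_natCard_eq_two (h : Nat.card K = 2) {a b : K} (hab : a + b = 1) :
    a ≠ b := by
  have := nontrivial_of_natCard_eq_two h
  rcases (add_eq_one_iff_of_natCard_eq_two h).1 hab with ⟨rfl, rfl⟩ | ⟨rfl, rfl⟩ <;> simp

end NatCardTwo

namespace CrosscapDef

variable {R : Type*} [CommRing R] {m : Ideal R} {S : Set Rˣ} {hS : S⁻¹ ⊆ S}

theorem mk_add_mk_eq_one_of_unitGammaGraph_adj (hcard : Nat.card (R ⧸ m) = 2) {x y : R}
    (hxy : (unitGammaGraph R S hS).Adj x y) :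
    Ideal.Quotient.mk m x + Ideal.Quotient.mk m y = 1 := by
  obtain ⟨-, s, -, u, -, hu⟩ := hxy
  have hmk : ∀ v : Rˣ, Ideal.Quotient.mk m v = 1 := fun v =>
    (v.isUnit.map _).eq_one_of_natCard_eq_two hcard
  simpa [hmk] using congr_arg (Ideal.Quotient.mk m) hu.symm

def unitGammaGraphColoring (hcard : Nat.card (R ⧸ m) = 2) :
    (unitGammaGraph R S hS).Coloring (R ⧸ m) :=
  SimpleGraph.Coloring.mk (Ideal.Quotient.mk m) fun hxy =>
    ne_of_add_eq_one_of_natCard_eq_two hcard (mk_add_mk_eq_one_of_unitGammaGraph_adj hcard hxy)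

theorem unitGammaGraph_colorable_two (hcard : Nat.card (R ⧸ m) = 2) :
    (unitGammaGraph R S hS).Colorable 2 := by
  have : Fintype (R ⧸ m) := @Fintype.ofFinite _ (Nat.finite_of_card_ne_zero (by omega))
  have h := (unitGammaGraphColoring (hS := hS) hcard).colorable
  rwa [Fintype.card_eq_nat_card, hcard] at h

theorem unitGammaGraph_adj_iff [IsLocalRing R] (hm : m.IsMaximal) (hcard : Nat.card (R ⧸ m) = 2)
    (hne : S.Nonempty) {x y : R} :
    (unitGammaGraph R S hS).Adj x y ↔ Ideal.Quotient.mk m x + Ideal.Quotient.mk m y = 1 := by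
  refine ⟨mk_add_mk_eq_one_of_unitGammaGraph_adj hcard, fun hxy => ?_⟩
  obtain ⟨s, hs⟩ := hne
  have hsy : Ideal.Quotient.mk m (s * y) = Ideal.Quotient.mk m y := by
    rw [map_mul, (s.isUnit.map _).eq_one_of_natCard_eq_two hcard, one_mul]
  have hunit : IsUnit (x + s * y) := by
    rw [← IsLocalRing.notMem_maximalIdeal, ← IsLocalRing.eq_maximalIdeal hm,
      ← Ideal.Quotient.eq_zero_iff_mem, map_add, hsy, hxy]
    have := nontrivial_of_natCard_eq_two hcard
    exact one_ne_zero
  exact ⟨fun h => ne_of_add_eq_one_of_natCard_eq_two hcard hxy (congr_arg _ h), s, hs,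
    hunit.unit, trivial, rfl⟩

end CrosscapDef

open CrosscapDef in
/-- If `R` has a maximal ideal `m` with `|R/m| = 2`, then `Γ(R, S)` is bipartite; if moreover
`R` is local with maximal ideal `m`, then `Γ(R, S)` is the complete bipartite graph with parts
`m` and `1 + m`. -/
theorem unitGammaGraph_bipartite {R : Type*} [CommRing R] (m : Ideal R) (hm : m.IsMaximal)
    (hcard : Nat.card (R ⧸ m) = 2) (S : Set Rˣ) (hne : S.Nonempty) (hS : S⁻¹ ⊆ S) :
    (unitGammaGraph R S hS).Colorable 2 ∧
    (IsLocalRing R → ∀ x y : R,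
      (unitGammaGraph R S hS).Adj x y ↔
        ((x ∈ m ∧ y - 1 ∈ m) ∨ (y ∈ m ∧ x - 1 ∈ m))) := by
  refine ⟨unitGammaGraph_colorable_two hcard, fun _ x y => ?_⟩
  rw [unitGammaGraph_adj_iff hm hcard hne, add_eq_one_iff_of_natCard_eq_two hcard]
  rw [Ideal.Quotient.eq_zero_iff_mem, Ideal.Quotient.eq_zero_iff_mem, Ideal.Quotient.mk_eq_one_iff_sub_mem, Ideal.Quotient.mk_eq_one_iff_sub_mem]
end

section
/- Let R be a commutative ring, S ⊆ U(R) with S⁻¹ ⊆ S, and suppose x, y ∈ R are adjacent in Γ(R, S) := Γ(R, U(R), S). Then for all j, j' in the Jacobson radical J(R), the elements x + j and y + j' are adjacent in Γ(R, S) (provided x + j ≠ y + j'). -/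
theorem IsUnit.add_of_mem_jacobson_bot {R : Type*} [CommRing R] {u k : R} (hu : IsUnit u)
    (hk : k ∈ (⊥ : Ideal R).jacobson) : IsUnit (u + k) := by
  obtain ⟨v, rfl⟩ := hu
  have hunit : IsUnit (k * ↑v⁻¹ + 1) := Ideal.mem_jacobson_bot.mp hk _
  have hfactor : (v : R) + k = v * (k * ↑v⁻¹ + 1) := by
    rw [mul_add, mul_one, mul_left_comm, Units.mul_inv, mul_one, add_comm]
  exact hfactor ▸ v.isUnit.mul hunit

namespace CrosscapDef

theorem unitGammaGraph_adj_iff_s11 {R : Type*} [CommRing R] {S : Set Rˣ} {hS : S⁻¹ ⊆ S} {x y : R} :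
    (unitGammaGraph R S hS).Adj x y ↔ x ≠ y ∧ ∃ s ∈ S, IsUnit (x + s * y) := by
  refine and_congr_right fun _ => exists_congr fun s => and_congr_right fun _ => ?_
  simp only [Subgroup.mem_top, true_and]
  rfl

end CrosscapDef

open CrosscapDef in
/-- If `x` and `y` are adjacent in `Γ(R, S)`, then for all `j, j'` in the Jacobson radical,
`x + j` and `y + j'` are adjacent (provided they are distinct). -/
theorem unitGammaGraph_adj_add_jacobson {R : Type*} [CommRing R] (S : Set Rˣ)
    (hS : S⁻¹ ⊆ S) (x y j j' : R) (hj : j ∈ (⊥ : Ideal R).jacobson)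
    (hj' : j' ∈ (⊥ : Ideal R).jacobson)
    (hadj : (unitGammaGraph R S hS).Adj x y) (hne : x + j ≠ y + j') :
    (unitGammaGraph R S hS).Adj (x + j) (y + j') := by
  obtain ⟨-, s, hs, hunit⟩ := unitGammaGraph_adj_iff_s11.mp hadj
  have hshift : x + j + s * (y + j') = (x + s * y) + (j + s * j') := by ring
  refine unitGammaGraph_adj_iff_s11.mpr ⟨hne, s, hs, hshift ▸ hunit.add_of_mem_jacobson_bot ?_⟩
  exact add_mem hj (Ideal.mul_mem_left _ _ hj')
end

section
/- Let R be an Artinian commutative ring and S ⊆ U(R) non-empty with S⁻¹ ⊆ S. If the nonorientable genus of Γ(R, S) := Γ(R, U(R), S) is finite, then R is a finite ring. -/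
/-!
If `R` is infinite, then for every `s` and every `n` there are disjoint `n`-sets `A, B ⊆ R`
with `a + s * b` a unit for all `a ∈ A`, `b ∈ B`, so `Γ(R, S)` contains `K_{n,n}` for every `n`.
If all residue fields of `R` are finite, the nilradical is infinite (it has finite index), and
one takes `B` inside it and `A = 1 + B`. Otherwise some residue field `R/m` is infinite; choose
`n`-sets `A', B'` there with `a' + s b' ≠ 0` and lift them by the Chinese remainder theorem to
elements that are `1` resp. `0` modulo every other maximal ideal.

On the other hand, in an embedding of a graph of minimum degree at least `2` the face-tracing
permutation has no cycles of length `1` or `2`, so every face has length at least `3` and Euler's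
formula gives `e + 6 ≤ 3 (v + k)` on the surface with `k` crosscaps. For the subgraph induced
on `A ∪ B` this gives `n² + 6 ≤ 3 (2n + k)`, so the crosscap numbers of the finite subgraphs are
unbounded.
-/

namespace Equiv.Perm

theorem sameCycle_permCongr {α β : Type*} (e : α ≃ β) (f : Perm α) {x y : α} :
    (e.permCongr f).SameCycle (e x) (e y) ↔ f.SameCycle x y := by
  refine exists_congr fun i => ?_
  rw [← e.permCongrHom_coe, ← map_zpow, e.permCongrHom_coe, permCongr_apply, e.symm_apply_apply,
    e.apply_eq_iff_eq]

theorem SameCycle.sigmaCongrRight {α : Type*} {β : α → Type*} {F : ∀ a, Perm (β a)} {a : α}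
    {x y : β a} (h : (F a).SameCycle x y) : (Perm.sigmaCongrRight F).SameCycle ⟨a, x⟩ ⟨a, y⟩ := by
  obtain ⟨i, hi⟩ := h
  refine ⟨i, ?_⟩
  have : Perm.sigmaCongrRight F ^ i = Perm.sigmaCongrRight (F ^ i) :=
    (map_zpow (sigmaCongrRightHom β) F i).symm
  rw [this, sigmaCongrRight_apply, Pi.pow_apply, hi]

theorem exists_forall_sameCycle (α : Type*) [Finite α] :
    ∃ f : Perm α, ∀ x y, f.SameCycle x y := by
  obtain ⟨n, ⟨e⟩⟩ := Finite.exists_equiv_fin α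
  rcases lt_or_ge n 2 with hn | hn
  · refine ⟨1, fun x y => ?_⟩
    have : x = y := e.injective (Fin.ext (by omega))
    exact this ▸ SameCycle.refl _ _
  · refine ⟨e.symm.permCongr (finRotate n), fun x y => ?_⟩
    rw [← e.symm_apply_apply x, ← e.symm_apply_apply y, sameCycle_permCongr]
    have hsupp := support_finRotate_of_le hn
    exact (isCycle_finRotate_of_le hn).sameCycle (mem_support.mp (hsupp ▸ Finset.mem_univ _))
      (mem_support.mp (hsupp ▸ Finset.mem_univ _))

end Equiv.Perm

namespace SimpleGraph

open Finset

variable {V : Type*}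

def dartEquivSigma (G : SimpleGraph V) : (Σ v, G.neighborSet v) ≃ G.Dart where
  toFun p := ⟨(p.1, p.2), p.2.2⟩
  invFun d := ⟨d.fst, d.snd, d.adj⟩

theorem card_le_degree_induce {G : SimpleGraph V} {s : Set V} {B : Finset V} (hB : ↑B ⊆ s) (v : s)
    [Fintype ((G.induce s).neighborSet v)] (hv : ∀ b ∈ B, G.Adj v b) :
    #B ≤ (G.induce s).degree v := by
  rw [← card_neighborSet_eq_degree, ← Fintype.card_coe B]
  exact Fintype.card_le_of_injective (fun b => ⟨⟨b, hB b.2⟩, hv b b.2⟩)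
    fun b b' h => Subtype.ext (congrArg (fun w => (w.1 : V)) h)

end SimpleGraph

namespace CrosscapDef

open SimpleGraph Finset

theorem three_mul_cycleCount_le {α : Type*} [Finite α] (f : Equiv.Perm α)
    (h₁ : ∀ x, f x ≠ x) (h₂ : ∀ x, f (f x) ≠ x) : 3 * cycleCount f ≤ Nat.card α := by
  have hpow : ∀ x, ∀ i j : Fin 3, (f ^ (i : ℕ)) x = (f ^ (j : ℕ)) x → i = j := by
    intro x i j h
    fin_cases i <;> fin_cases j <;> simp_all [pow_succ, eq_comm]
  let F : Quotient (Equiv.Perm.SameCycle.setoid f) × Fin 3 → α :=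
    fun p => (f ^ (p.2 : ℕ)) p.1.out
  have hF : F.Injective := by
    rintro ⟨q, i⟩ ⟨q', j⟩ (h : (f ^ (i : ℕ)) q.out = (f ^ (j : ℕ)) q'.out)
    have hq : q = q' := by
      rw [← Quotient.out_eq q, ← Quotient.out_eq q']
      have : f.SameCycle ((f ^ (i : ℕ)) q.out) ((f ^ (j : ℕ)) q'.out) := h ▸ .refl f _
      exact Quotient.sound
        (Equiv.Perm.sameCycle_pow_left.mp (Equiv.Perm.sameCycle_pow_right.mp this))
    subst hq
    rw [hpow _ _ _ h]
  calc 3 * cycleCount f = Nat.card (Quotient (Equiv.Perm.SameCycle.setoid f) × Fin 3) := by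
        rw [Nat.card_prod, Nat.card_fin, mul_comm]; rfl
    _ ≤ Nat.card α := Nat.card_le_card_of_injective F hF

variable {V : Type*} {G : SimpleGraph V}

namespace Scheme

theorem exists_sgn_eq [∀ v, Finite (G.neighborSet v)] (sgn : G.Dart → Bool)
    (hsgn : ∀ d, sgn d.symm = sgn d) : ∃ σ : Scheme G, σ.sgn = sgn := by
  choose ρ hρ using fun v => Equiv.Perm.exists_forall_sameCycle (G.neighborSet v)
  refine ⟨{ rot := G.dartEquivSigma.permCongr (Equiv.Perm.sigmaCongrRight ρ)
            rot_fst := fun d => rfl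
            rot_single := ?_
            sgn
            sgn_symm := hsgn }, rfl⟩
  rintro ⟨⟨v, w⟩, hw⟩ ⟨⟨v', w'⟩, hw'⟩ (rfl : v = v')
  exact (Equiv.Perm.sameCycle_permCongr G.dartEquivSigma _ (x := ⟨v, w, hw⟩)
    (y := ⟨v, w', hw'⟩)).mpr (hρ v ⟨w, hw⟩ ⟨w', hw'⟩).sigmaCongrRight

theorem facePerm_mk (σ : Scheme G) (d : G.Dart) (s : Bool) :
    σ.facePerm (d, s) =
      (cond (xor s (σ.sgn d)) (σ.rot d.symm) (σ.rot.symm d.symm), xor s (σ.sgn d)) :=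
  rfl

theorem rot_symm_fst (σ : Scheme G) (d : G.Dart) : (σ.rot.symm d).fst = d.fst := by
  simpa using (σ.rot_fst (σ.rot.symm d)).symm

theorem fst_facePerm (σ : Scheme G) (p : G.Dart × Bool) :
    (σ.facePerm p).1.fst = p.1.snd := by
  obtain ⟨d, s⟩ := p
  rw [facePerm_mk]
  cases xor s (σ.sgn d) <;> simp [rot_fst, rot_symm_fst]

theorem facePerm_ne (σ : Scheme G) (p : G.Dart × Bool) : σ.facePerm p ≠ p := by
  intro h
  have := σ.fst_facePerm p
  rw [h] at this
  exact p.1.fst_ne_snd this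

theorem rot_ne [G.LocallyFinite] (σ : Scheme G) {d : G.Dart} (hd : 2 ≤ G.degree d.fst) :
    σ.rot d ≠ d := by
  intro hfix
  obtain ⟨w₁, hw₁, w₂, hw₂, hne⟩ := one_lt_card.mp (card_neighborFinset_eq_degree G d.fst ▸ hd)
  rw [mem_neighborFinset] at hw₁ hw₂
  have h₁ := (σ.rot_single d ⟨(d.fst, w₁), hw₁⟩ rfl).eq_of_left hfix
  have h₂ := (σ.rot_single d ⟨(d.fst, w₂), hw₂⟩ rfl).eq_of_left hfix
  exact hne (congrArg (·.snd) (h₁.symm.trans h₂))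

theorem rot_symm_ne [G.LocallyFinite] (σ : Scheme G) {d : G.Dart} (hd : 2 ≤ G.degree d.fst) :
    σ.rot.symm d ≠ d :=
  fun h => σ.rot_ne hd (σ.rot.symm_apply_eq.mp h).symm

theorem facePerm_facePerm_ne [G.LocallyFinite] (σ : Scheme G) (hdeg : ∀ v, 2 ≤ G.degree v)
    (p : G.Dart × Bool) : σ.facePerm (σ.facePerm p) ≠ p := by
  obtain ⟨d, s⟩ := p
  intro h
  -- a face of length two runs along `d` and straight back along `d.symm`
  have hback : (σ.facePerm (d, s)).1 = d.symm := by
    refine Dart.ext _ _ (Prod.ext (σ.fst_facePerm _) ?_)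
    simpa [h] using (σ.fst_facePerm (σ.facePerm (d, s))).symm
  rw [facePerm_mk] at hback
  generalize xor s (σ.sgn d) = b at hback
  cases b
  · exact σ.rot_symm_ne (hdeg _) hback
  · exact σ.rot_ne (hdeg _) hback

variable [Fintype V] [DecidableRel G.Adj]

theorem three_mul_faceCount_le (σ : Scheme G) (hdeg : ∀ v, 2 ≤ G.degree v) :
    3 * σ.faceCount ≤ 2 * #G.edgeFinset := by
  have h := three_mul_cycleCount_le σ.facePerm σ.facePerm_ne (σ.facePerm_facePerm_ne hdeg)
  rw [Nat.card_prod, Nat.card_eq_fintype_card (α := G.Dart), dart_card_eq_twice_card_edges,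
    Nat.card_eq_fintype_card (α := Bool), Fintype.card_bool] at h
  unfold faceCount
  omega

theorem card_edgeFinset_add_six_le (σ : Scheme G) (hdeg : ∀ v, 2 ≤ G.degree v) :
    (#G.edgeFinset : ℤ) + 6 ≤ 3 * (Fintype.card V + σ.eulerGenus) := by
  have hF := σ.three_mul_faceCount_le hdeg
  have hD := G.dart_card_eq_twice_card_edges
  rw [eulerGenus, Nat.card_eq_fintype_card, Nat.card_eq_fintype_card, hD]
  omega

end Scheme

theorem EmbedsWithCrosscaps.card_edgeFinset_add_six_le [Fintype V] [DecidableRel G.Adj] {k : ℕ}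
    (h : EmbedsWithCrosscaps G k) (hdeg : ∀ v, 2 ≤ G.degree v) :
    #G.edgeFinset + 6 ≤ 3 * (Fintype.card V + k) := by
  classical
  obtain ⟨H, hGH, -, σ, hσ, -⟩ := h
  have hE : #G.edgeFinset ≤ #H.edgeFinset := card_le_card (edgeFinset_mono hGH)
  have := σ.card_edgeFinset_add_six_le fun v => (hdeg v).trans (degree_le_of_le hGH)
  omega

theorem exists_embedsWithCrosscaps [Fintype V] (G : SimpleGraph V) (hV : 3 ≤ Fintype.card V) :
    ∃ k, EmbedsWithCrosscaps G k := by
  classical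
  obtain ⟨σ, hσ⟩ := Scheme.exists_sgn_eq (G := (⊤ : SimpleGraph V)) (fun _ => true) fun _ => rfl
  have hE := σ.card_edgeFinset_add_six_le fun v => by rw [complete_graph_degree]; omega
  rw [card_edgeFinset_top_eq_card_choose_two] at hE
  have hσ₀ : 0 ≤ σ.eulerGenus := by
    generalize Fintype.card V = m at hE hV
    have hc : m.choose 2 * 2 = m * (m - 1) := by
      rw [Nat.choose_two_right, Nat.div_mul_cancel (Nat.even_mul_pred_self m).two_dvd]
    obtain ⟨k, rfl⟩ := Nat.exists_eq_add_of_le' hV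
    have hc' : ((k + 3).choose 2 : ℤ) * 2 = (k + 3) * (k + 2) := by
      rw [show k + 3 - 1 = k + 2 by omega] at hc
      exact_mod_cast hc
    push_cast at hE
    nlinarith [sq_nonneg ((k : ℤ) - 1)]
  refine ⟨σ.eulerGenus.toNat, ⊤, le_top, preconnected_top, σ, (Int.toNat_of_nonneg hσ₀).symm,
    Or.inr ?_⟩
  -- with every edge twisted, a switching function would have to 2-colour a triangle
  rintro ⟨f, hf⟩
  obtain ⟨a, b, c, hab, hac, hbc⟩ := Fintype.two_lt_card_iff.mp hV
  have h₁ := hf ⟨(a, b), hab⟩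
  have h₂ := hf ⟨(a, c), hac⟩
  have h₃ := hf ⟨(b, c), hbc⟩
  simp only [hσ] at h₁ h₂ h₃
  cases f a <;> cases f b <;> cases f c <;> simp_all

-- `crosscap` is an `sInf`, hence `0` unless some embedding exists.
theorem embedsWithCrosscaps_crosscap [Fintype V] (G : SimpleGraph V) (hV : 3 ≤ Fintype.card V) :
    EmbedsWithCrosscaps G (crosscap G) :=
  Nat.sInf_mem (exists_embedsWithCrosscaps G hV)

theorem card_edgeFinset_add_six_le_crosscap [Fintype V] [DecidableRel G.Adj] [Nonempty V]
    (hdeg : ∀ v, 2 ≤ G.degree v) : #G.edgeFinset + 6 ≤ 3 * (Fintype.card V + crosscap G) := by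
  have v : V := Classical.arbitrary V
  have hV : 3 ≤ Fintype.card V := (hdeg v).trans_lt (G.degree_lt_card_verts v)
  exact (embedsWithCrosscaps_crosscap G hV).card_edgeFinset_add_six_le hdeg

theorem crosscapE_eq_top_of_forall_isCompleteBetween
    (h : ∀ n, ∃ A B : Finset V, #A = n ∧ #B = n ∧ G.IsCompleteBetween A B) :
    crosscapE G = ⊤ := by
  classical
  refine ENat.eq_top_iff_forall_ge.mpr fun N => ?_
  obtain ⟨A, B, hA, hB, hAB⟩ := h (N + 6)
  set H := G.induce (↑(A ∪ B) : Set V)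
  have hdeg : ∀ v, N + 6 ≤ H.degree v := by
    rintro ⟨v, hv⟩
    rcases mem_union.mp hv with hvA | hvB
    · exact hB ▸ card_le_degree_induce (by simp) _ fun b hb => hAB hvA hb
    · exact hA ▸ card_le_degree_induce (by simp) _ fun a ha => (hAB ha hvB).symm
  have hV : Fintype.card ↥(↑(A ∪ B) : Set V) = 2 * (N + 6) := by
    simp only [coe_sort_coe, Fintype.card_coe]
    rw [card_union_of_disjoint (disjoint_coe.mp hAB.disjoint), hA, hB]
    ring
  have : Nonempty ↥(↑(A ∪ B) : Set V) := Fintype.card_pos_iff.mp (by omega)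
  have hE : Fintype.card ↥(↑(A ∪ B) : Set V) * (N + 6) ≤ 2 * #H.edgeFinset := by
    rw [← sum_degrees_eq_twice_card_edges]
    simpa using card_nsmul_le_sum univ _ _ fun v _ => hdeg v
  have hcross :=
    card_edgeFinset_add_six_le_crosscap fun v => (by omega : 2 ≤ N + 6).trans (hdeg v)
  rw [hV] at hE hcross
  have hN : N ≤ crosscap H := by nlinarith
  calc (N : ℕ∞) ≤ crosscap H := by exact_mod_cast hN
    _ ≤ crosscapE G :=
      le_iSup (fun s : Finset V => (crosscap (G.induce (s : Set V)) : ℕ∞)) (A ∪ B)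

end CrosscapDef

section UnitBiclique

open Finset

variable {R : Type*} [CommRing R]

theorem Ideal.infinite_of_finite_quotient [Infinite R] (I : Ideal R) [Finite (R ⧸ I)] :
    (I : Set R).Infinite := fun hI =>
  have : Finite (R ⧸ I.toAddSubgroup) := ‹Finite (R ⧸ I)›
  not_finite_iff_infinite.mpr ‹_› ((AddSubgroup.finite_iff_finite_and_finiteIndex
    I.toAddSubgroup).mpr ⟨hI.to_subtype, AddSubgroup.finiteIndex_of_finite_quotient⟩)

theorem exists_isUnit_add_mul_of_infinite_nilradical (s : R)
    (hnil : (nilradical R : Set R).Infinite) (n : ℕ) :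
    ∃ A B : Finset R, #A = n ∧ #B = n ∧ Disjoint A B ∧
      ∀ a ∈ A, ∀ b ∈ B, IsUnit (a + s * b) := by
  classical
  obtain ⟨T, hT, hTn⟩ := hnil.exists_subset_card_eq n
  have : Nontrivial R := by
    obtain ⟨x, -, y, -, hxy⟩ := hnil.nontrivial
    exact nontrivial_of_ne x y hxy
  refine ⟨T.image (1 + ·), T, by rwa [card_image_of_injective _ (add_right_injective 1)], hTn,
    disjoint_left.mpr ?_, ?_⟩
  · rintro _ ha hT'
    obtain ⟨t, ht, rfl⟩ := mem_image.mp ha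
    exact (mem_nilradical.mp (hT hT')).not_isUnit (mem_nilradical.mp (hT ht)).isUnit_one_add
  · rintro _ ha b hb
    obtain ⟨t, ht, rfl⟩ := mem_image.mp ha
    rw [add_assoc]
    exact (mem_nilradical.mp (add_mem (hT ht) (Ideal.mul_mem_left _ s (hT hb)))).isUnit_one_add

theorem exists_isUnit_add_mul_of_infinite_residueField [Finite (MaximalSpectrum R)]
    (m : MaximalSpectrum R) [Infinite (R ⧸ m.asIdeal)] (s : R) (n : ℕ) :
    ∃ A B : Finset R, #A = n ∧ #B = n ∧ Disjoint A B ∧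
      ∀ a ∈ A, ∀ b ∈ B, IsUnit (a + s * b) := by
  classical
  obtain ⟨e, he⟩ := Ideal.pi_quotient_surjective (fun I J h => I.isCoprime_of_ne h)
    (Pi.single (M := fun I : MaximalSpectrum R => R ⧸ I.asIdeal) m 1)
  let π := Ideal.Quotient.mk m.asIdeal
  let ℓ := Function.surjInv (Ideal.Quotient.mk_surjective (I := m.asIdeal))
  -- `α u ≡ u`, `β u ≡ u` modulo `m`, while `α u ≡ 1`, `β u ≡ 0` modulo every other maximal ideal
  let α (u : R ⧸ m.asIdeal) : R := ℓ u * e + (1 - e)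
  let β (u : R ⧸ m.asIdeal) : R := ℓ u * e
  have hα : ∀ u, π (α u) = u := fun u => by
    simp [α, π, ℓ, he m, Function.surjInv_eq]
  have hβ : ∀ u, π (β u) = u := fun u => by
    simp [β, π, ℓ, he m, Function.surjInv_eq]
  have hαβ : ∀ I ≠ m, ∀ u w, Ideal.Quotient.mk I.asIdeal (α u + s * β w) = 1 :=
    fun I hI u w => by simp [α, β, he I, Pi.single_eq_of_ne hI]
  obtain ⟨B', hB'⟩ := Infinite.exists_subset_card_eq (R ⧸ m.asIdeal) n
  obtain ⟨A', hA'sub, hA'⟩ := (B' ∪ B'.image fun w => -(π s * w)).finite_toSet.infinite_compl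
    |>.exists_subset_card_eq n
  refine ⟨A'.image α, B'.image β,
    by rwa [card_image_of_injective _ (Function.LeftInverse.injective hα)],
    by rwa [card_image_of_injective _ (Function.LeftInverse.injective hβ)],
    disjoint_left.mpr ?_, ?_⟩
  · rintro _ ha hb
    obtain ⟨u, hu, rfl⟩ := mem_image.mp ha
    obtain ⟨w, hw, hwu⟩ := mem_image.mp hb
    have : w = u := by rw [← hβ w, ← hα u, hwu]
    exact hA'sub hu (mem_union_left _ (this ▸ hw))
  · rintro _ ha _ hb
    obtain ⟨u, hu, rfl⟩ := mem_image.mp ha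
    obtain ⟨w, hw, rfl⟩ := mem_image.mp hb
    by_contra hunit
    obtain ⟨M, hM, hmem⟩ := exists_max_ideal_of_mem_nonunits hunit
    rw [← Ideal.Quotient.eq_zero_iff_mem] at hmem
    by_cases hMm : (⟨M, hM⟩ : MaximalSpectrum R) = m
    · subst hMm
      change π (α u + s * β w) = 0 at hmem
      rw [map_add, map_mul, hα, hβ] at hmem
      exact hA'sub hu (mem_union_right _
        (mem_image.mpr ⟨w, hw, (eq_neg_of_add_eq_zero_left hmem).symm⟩))
    · have := Ideal.Quotient.nontrivial_iff.mpr hM.ne_top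
      exact one_ne_zero ((hαβ _ hMm u w).symm.trans hmem)

theorem exists_isUnit_add_mul_of_isArtinianRing [IsArtinianRing R] [Infinite R] (s : R) (n : ℕ) :
    ∃ A B : Finset R, #A = n ∧ #B = n ∧ Disjoint A B ∧
      ∀ a ∈ A, ∀ b ∈ B, IsUnit (a + s * b) := by
  by_cases h : ∀ m : MaximalSpectrum R, Finite (R ⧸ m.asIdeal)
  · have : Finite (R ⧸ nilradical R) :=
      (IsArtinianRing.quotNilradicalEquivPi R).toEquiv.finite_iff.mpr Pi.finite
    exact exists_isUnit_add_mul_of_infinite_nilradical s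
      (nilradical R).infinite_of_finite_quotient n
  · obtain ⟨m, hm⟩ := not_forall.mp h
    have : Infinite (R ⧸ m.asIdeal) := not_finite_iff_infinite.mp hm
    exact exists_isUnit_add_mul_of_infinite_residueField m s n

end UnitBiclique

namespace CrosscapDef

theorem unitGammaGraph_isCompleteBetween {R : Type*} [CommRing R] {S : Set Rˣ} (hS : S⁻¹ ⊆ S)
    {s : Rˣ} (hs : s ∈ S) {A B : Finset R} (hAB : Disjoint A B)
    (hunit : ∀ a ∈ A, ∀ b ∈ B, IsUnit (a + s * b)) :
    (unitGammaGraph R S hS).IsCompleteBetween A B := fun a ha b hb =>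
  ⟨fun hab => Finset.disjoint_left.mp hAB ha (hab ▸ hb), s, hs, (hunit a ha b hb).unit,
    Subgroup.mem_top _, (hunit a ha b hb).unit_spec⟩

end CrosscapDef

open CrosscapDef in
/-- If `R` is an Artinian commutative ring whose graph `Γ(R, S)` has finite nonorientable
genus, then `R` is a finite ring. -/
theorem finite_of_crosscap_ne_top {R : Type*} [CommRing R] [IsArtinianRing R] (S : Set Rˣ)
    (hne : S.Nonempty) (hS : S⁻¹ ⊆ S)
    (h : crosscapE (unitGammaGraph R S hS) ≠ ⊤) : Finite R := by
  by_contra hfin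
  have : Infinite R := not_finite_iff_infinite.mp hfin
  obtain ⟨s, hs⟩ := hne
  refine h (crosscapE_eq_top_of_forall_isCompleteBetween fun n => ?_)
  obtain ⟨A, B, hA, hB, hAB, hunit⟩ := exists_isUnit_add_mul_of_isArtinianRing (s : R) n
  exact ⟨A, B, hA, hB, unitGammaGraph_isCompleteBetween hS hs hAB hunit⟩
end
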